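/- Let u : ℕ → ℝ be a utility sequence with |u_{t+1} − u_t| ≤ W for all t for some constant W, and let T ∈ ℕ. Then val(u,T) ≥ 0 if and only if there exists a slope M ∈ ℝ such that u_t ≥ M·(t − T) for all t ≥ 0. -/

import Mathlib

open scoped BigOperators

/-- A stopping-time distribution: pointwise nonnegative, total mass `1`,
with absolutely convergent expected time. -/
def IsStopDist (δ : ℕ → ℝ) : Prop :=
  (∀ t, 0 ≤ δ t) ∧ Summable δ ∧ (∑' t, δ t) = 1 ∧
    Summable (fun t : ℕ => (t : ℝ) * δ t)

/-- The expected (stopping) time of `δ`. -/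
noncomputable def expTime (δ : ℕ → ℝ) : ℝ := ∑' t : ℕ, (t : ℝ) * δ t

/-- The expected utility of the utility sequence `u` under `δ`. -/
noncomputable def expUtil (u δ : ℕ → ℝ) : ℝ := ∑' t : ℕ, u t * δ t

/-- The value of a utility sequence `u` under adversarial stopping-time
distributions with expected time `T`:
`val u T = inf { 𝔼_δ(u) | δ a stopping-time distribution with 𝔼_δ = T }`. -/
noncomputable def val (u : ℕ → ℝ) (T : ℕ) : ℝ :=
  sInf {x | ∃ δ : ℕ → ℝ, IsStopDist δ ∧ (Summable fun t => u t * δ t) ∧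
    expTime δ = (T : ℝ) ∧ x = expUtil u δ}

/-!
If `u` lies above the line `M·(t - T)`, its expected utility under a stopping time of mean `T`
is at least that of the line, which is `0`. Conversely, `val u T ≥ 0` applied to two-point
stopping times with mean `T` says that every chord of `u` joining some `t < T` to some `r > T`
passes above `0` at `T`, i.e. `-u t / (T - t) ≤ u r / (r - T)`; any `M` between the supremum of
the left-hand sides and the infimum of the right-hand sides is a valid slope. The bound
`|u (t+1) - u t| ≤ W` makes that infimum finite and keeps `val` from being the junk infimum of
a set unbounded below.
-/

open Set

section StopDist

variable {δ : ℕ → ℝ}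

theorem IsStopDist.tsum_affine_mul (hδ : IsStopDist δ) (a b : ℝ) :
    ∑' t : ℕ, (a + b * t) * δ t = a + b * expTime δ := by
  obtain ⟨-, hsum, hmass, htime⟩ := hδ
  calc ∑' t : ℕ, (a + b * t) * δ t = ∑' t : ℕ, (a * δ t + b * ((t : ℝ) * δ t)) :=
        tsum_congr fun t => by ring
    _ = a + b * expTime δ := by
        rw [(hsum.mul_left a).tsum_add (htime.mul_left b), tsum_mul_left, tsum_mul_left, hmass,
          mul_one, expTime]

theorem IsStopDist.le_expUtil_of_affine_le (hδ : IsStopDist δ) {u : ℕ → ℝ}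
    (hu : Summable fun t => u t * δ t) {a b : ℝ} (hab : ∀ t : ℕ, a + b * t ≤ u t) :
    a + b * expTime δ ≤ expUtil u δ := by
  rw [← hδ.tsum_affine_mul]
  have hsum : Summable fun t : ℕ => (a + b * t) * δ t := by
    obtain ⟨-, hsum, -, htime⟩ := hδ
    exact ((hsum.mul_left a).add (htime.mul_left b)).congr fun t => by ring
  exact hsum.tsum_le_tsum (fun t => mul_le_mul_of_nonneg_right (hab t) (hδ.1 t)) hu

end StopDist

section TwoPoint

noncomputable def twoPoint (a b : ℕ) (p q : ℝ) : ℕ → ℝ :=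
  Pi.single a p + Pi.single b q

variable {a b : ℕ} {p q : ℝ}

theorem hasSum_mul_twoPoint (f : ℕ → ℝ) :
    HasSum (fun t => f t * twoPoint a b p q t) (f a * p + f b * q) := by
  have h : (fun t => f t * twoPoint a b p q t) = Pi.single a (f a * p) + Pi.single b (f b * q) := by
    rw [twoPoint, Pi.single_mul_right, Pi.single_mul_right]
    ext t
    simp only [Pi.add_apply, Pi.mul_apply, mul_add]
  rw [h]
  exact (hasSum_pi_single a _).add (hasSum_pi_single b _)

theorem isStopDist_twoPoint (hp : 0 ≤ p) (hq : 0 ≤ q) (hpq : p + q = 1) :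
    IsStopDist (twoPoint a b p q) := by
  have hmass := hasSum_mul_twoPoint (a := a) (b := b) (p := p) (q := q) fun _ => 1
  simp only [one_mul] at hmass
  have hnonneg : (0 : ℕ → ℝ) ≤ twoPoint a b p q :=
    add_nonneg (Pi.single_nonneg.mpr hp) (Pi.single_nonneg.mpr hq)
  exact ⟨hnonneg, hmass.summable, hpq ▸ hmass.tsum_eq, (hasSum_mul_twoPoint _).summable⟩

theorem expTime_twoPoint : expTime (twoPoint a b p q) = a * p + b * q :=
  (hasSum_mul_twoPoint _).tsum_eq

theorem expUtil_twoPoint (u : ℕ → ℝ) : expUtil u (twoPoint a b p q) = u a * p + u b * q :=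
  (hasSum_mul_twoPoint u).tsum_eq

end TwoPoint

section Val

variable {u : ℕ → ℝ} {T : ℕ}

theorem val_le_expUtil {a b : ℝ} (hab : ∀ t : ℕ, a + b * t ≤ u t) {δ : ℕ → ℝ}
    (hδ : IsStopDist δ) (hu : Summable fun t => u t * δ t) (hT : expTime δ = T) :
    val u T ≤ expUtil u δ := by
  refine csInf_le ⟨a + b * T, ?_⟩ ⟨δ, hδ, hu, hT, rfl⟩
  rintro _ ⟨δ', hδ', hu', hT', rfl⟩
  exact hT' ▸ hδ'.le_expUtil_of_affine_le hu' hab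

theorem val_nonneg_of_slope {M : ℝ} (hM : ∀ t : ℕ, M * ((t : ℝ) - T) ≤ u t) : 0 ≤ val u T := by
  apply Real.sInf_nonneg
  rintro _ ⟨δ, hδ, hu, hT, rfl⟩
  have h := hδ.le_expUtil_of_affine_le hu (a := -(M * T)) (b := M) fun t => by linarith [hM t]
  rwa [hT, neg_add_cancel] at h

theorem expUtil_twoPoint_nonneg {a b : ℝ} (hab : ∀ t : ℕ, a + b * t ≤ u t) (hval : 0 ≤ val u T)
    {s r : ℕ} {p q : ℝ} (hp : 0 ≤ p) (hq : 0 ≤ q) (hpq : p + q = 1) (hmean : s * p + r * q = T) :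
    0 ≤ u s * p + u r * q := by
  rw [← expUtil_twoPoint]
  exact hval.trans <| val_le_expUtil hab (isStopDist_twoPoint hp hq hpq)
    (hasSum_mul_twoPoint u).summable (expTime_twoPoint.trans hmean)

theorem chord_nonneg_of_val_nonneg {a b : ℝ} (hab : ∀ t : ℕ, a + b * t ≤ u t)
    (hval : 0 ≤ val u T) {t r : ℕ} (ht : t < T) (hr : T < r) :
    0 ≤ ((r : ℝ) - T) * u t + ((T : ℝ) - t) * u r := by
  have htT : (t : ℝ) < T := Nat.cast_lt.mpr ht
  have hTr : (T : ℝ) < r := Nat.cast_lt.mpr hr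
  have hrt : (0 : ℝ) < r - t := by linarith
  have hnonneg := expUtil_twoPoint_nonneg hab hval (s := t) (r := r)
    (p := ((r : ℝ) - T) / (r - t)) (q := ((T : ℝ) - t) / (r - t))
    (div_nonneg (by linarith) hrt.le) (div_nonneg (by linarith) hrt.le)
    (by field_simp; ring) (by field_simp; ring)
  calc 0 ≤ (r - t) * (u t * (((r : ℝ) - T) / (r - t)) + u r * (((T : ℝ) - t) / (r - t))) :=
        mul_nonneg hrt.le hnonneg
    _ = ((r : ℝ) - T) * u t + ((T : ℝ) - t) * u r := by field_simp

end Val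

section Slope

variable {u : ℕ → ℝ} {T : ℕ}

theorem sub_mul_le_of_abs_sub_succ_le {W : ℝ} (hW : ∀ t, |u (t + 1) - u t| ≤ W) {s t : ℕ}
    (hst : s ≤ t) : u s - W * ((t : ℝ) - s) ≤ u t := by
  induction t, hst using Nat.le_induction with
  | base => simp
  | succ n _ ih =>
    have := (abs_le.mp (hW n)).1
    push_cast
    linarith

theorem bddBelow_slopes_of_abs_sub_succ_le {W : ℝ} (hW : ∀ t, |u (t + 1) - u t| ≤ W)
    (hT : 0 ≤ u T) : BddBelow ((fun r : ℕ => u r / ((r : ℝ) - T)) '' Ioi T) := by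
  refine ⟨-W, ?_⟩
  rintro _ ⟨r, hr, rfl⟩
  have hpos : (0 : ℝ) < r - T := sub_pos.mpr (Nat.cast_lt.mpr hr)
  have := sub_mul_le_of_abs_sub_succ_le hW hr.le
  rw [le_div_iff₀ hpos]
  linarith

theorem exists_slope_of_chord_nonneg (hT : 0 ≤ u T)
    (hchord : ∀ t r : ℕ, t < T → T < r → 0 ≤ ((r : ℝ) - T) * u t + ((T : ℝ) - t) * u r)
    (hbdd : BddBelow ((fun r : ℕ => u r / ((r : ℝ) - T)) '' Ioi T)) :
    ∃ M : ℝ, ∀ t : ℕ, M * ((t : ℝ) - T) ≤ u t := by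
  set S := (fun r : ℕ => u r / ((r : ℝ) - T)) '' Ioi T
  refine ⟨sInf S, fun t => ?_⟩
  rcases lt_trichotomy t T with ht | rfl | ht
  · have hpos : (0 : ℝ) < T - t := sub_pos.mpr (Nat.cast_lt.mpr ht)
    have hle : -u t / (T - t) ≤ sInf S := by
      refine le_csInf ⟨_, T + 1, Nat.lt_succ_self T, rfl⟩ ?_
      rintro _ ⟨r, hr, rfl⟩
      have hr' : (0 : ℝ) < r - T := sub_pos.mpr (Nat.cast_lt.mpr hr)
      rw [div_le_div_iff₀ hpos hr']
      linarith [hchord t r ht hr]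
    rw [div_le_iff₀ hpos] at hle
    linarith
  · simpa using hT
  · have hpos : (0 : ℝ) < t - T := sub_pos.mpr (Nat.cast_lt.mpr ht)
    exact (le_div_iff₀ hpos).mp (csInf_le hbdd ⟨t, ht, rfl⟩)

end Slope

/-- The value of `u` is at least `0` if and only if there exists a slope `M`
such that `u` lies above the line `M·(t - T)`. -/
theorem val_nonneg_iff_exists_slope
    (u : ℕ → ℝ) (W : ℝ) (hW : ∀ t, |u (t + 1) - u t| ≤ W) (T : ℕ) :
    0 ≤ val u T ↔ ∃ M : ℝ, ∀ t : ℕ, M * ((t : ℝ) - (T : ℝ)) ≤ u t := by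
  refine ⟨fun hval => ?_, fun ⟨M, hM⟩ => val_nonneg_of_slope hM⟩
  have hlin : ∀ t : ℕ, u 0 + -W * t ≤ u t := fun t => by
    simpa [sub_eq_add_neg] using sub_mul_le_of_abs_sub_succ_le hW (Nat.zero_le t)
  have hT : 0 ≤ u T := by
    simpa using expUtil_twoPoint_nonneg hlin hval (s := T) (r := T) zero_le_one le_rfl
      (add_zero 1) (by ring)
  exact exists_slope_of_chord_nonneg hT (fun t r => chord_nonneg_of_val_nonneg hlin hval)
    (bddBelow_slopes_of_abs_sub_succ_le hW hT)
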